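/- arXiv:2510.26740 — 7 statements merged into one kernel-verified Lean document; each statement's English description precedes it below -/
import Mathlib

section
/- For the negative-variance fairness function F_var(Z) = −(1/n)Σᵢ(zᵢ − μ)², where μ = (1/n)Σᵢ zᵢ, and a nonnegative increment vector y, the joint fairness improvement dominates the sum of local gains: F_var(Z+y) − F_var(Z) ≥ Σᵢ [F_var(Z + yᵢeᵢ) − F_var(Z)]. -/
/-!
`Fvar` is a quadratic form, `Fvar W = (∑ W)² / n² - (∑ W²) / n`, so
`Fvar (Z + v) - Fvar Z = Fvar v + ⟪∇Fvar Z, v⟫`. The gradient terms of the joint gain and of the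
local gains add up to the same thing, and what remains is
`Fvar y - ∑ i, Fvar (yᵢ eᵢ) = ((∑ y)² - ∑ y²) / n²`, which is nonnegative because `y ≥ 0`.
-/

open Finset

/-- Negative-variance fairness function `F_var(Z) = -(1/n) ∑ i (z_i - μ)²`. -/
noncomputable def Fvar {n : ℕ} (Z : Fin n → ℝ) : ℝ :=
  -((1 : ℝ) / n) * ∑ i, (Z i - (∑ j, Z j) / n) ^ 2

section

variable {n : ℕ}

lemma Fvar_eq (W : Fin n → ℝ) :
    Fvar W = (∑ i, W i) ^ 2 / n ^ 2 - (∑ i, W i ^ 2) / n := by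
  rcases n.eq_zero_or_pos with rfl | hn
  · simp [Fvar]
  have hn' : (n : ℝ) ≠ 0 := by positivity
  simp only [Fvar, sub_sq, sum_add_distrib, sum_sub_distrib, sum_const, card_univ,
    Fintype.card_fin, nsmul_eq_mul, ← sum_mul, ← mul_sum]
  field_simp
  ring

lemma Fvar_add_sub (Z v : Fin n → ℝ) :
    Fvar (Z + v) - Fvar Z = Fvar v + ∑ j, v j * (2 * ((∑ k, Z k) / n - Z j) / n) := by
  have sum_sq_add : ∑ j, (Z j + v j) ^ 2 = ∑ j, Z j ^ 2 + 2 * ∑ j, Z j * v j + ∑ j, v j ^ 2 := by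
    simp only [add_sq, sum_add_distrib, mul_assoc, ← mul_sum]
  have linear_term : ∑ j, v j * (2 * ((∑ k, Z k) / n - Z j) / n)
      = 2 * (∑ k, Z k) / n ^ 2 * ∑ j, v j - 2 / n * ∑ j, Z j * v j := by
    rw [mul_sum (a := 2 * (∑ k, Z k) / n ^ 2), mul_sum (a := 2 / (n : ℝ)), ← sum_sub_distrib]
    exact sum_congr rfl fun j _ ↦ by ring
  rw [Fvar_eq, Fvar_eq, Fvar_eq, linear_term]
  simp only [Pi.add_apply, sum_add_distrib, sum_sq_add]
  ring

lemma Fvar_single (i : Fin n) (a : ℝ) :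
    Fvar (Pi.single i a) = a ^ 2 / n ^ 2 - a ^ 2 / n := by
  simp [Fvar_eq, sq, ← Pi.single_mul_left_apply]

lemma Fvar_sub_sum_Fvar_single (y : Fin n → ℝ) :
    Fvar y - ∑ i, Fvar (Pi.single i (y i)) = ((∑ i, y i) ^ 2 - ∑ i, y i ^ 2) / n ^ 2 := by
  simp only [Fvar_single, sum_sub_distrib, ← sum_div]
  rw [Fvar_eq]
  ring

lemma update_add_eq_add_single (Z : Fin n → ℝ) (i : Fin n) (a : ℝ) :
    Function.update Z i (Z i + a) = Z + Pi.single i a := by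
  ext j
  rcases eq_or_ne j i with rfl | h <;> simp_all

end

theorem neg_variance_local_gain_lb_general {n : ℕ}
    (Z y : Fin n → ℝ) (hy : ∀ i, 0 ≤ y i) :
    Fvar (Z + y) - Fvar Z ≥
      ∑ i, (Fvar (Function.update Z i (Z i + y i)) - Fvar Z) := by
  have local_gain (i : Fin n) : Fvar (Function.update Z i (Z i + y i)) - Fvar Z
      = Fvar (Pi.single i (y i)) + y i * (2 * ((∑ k, Z k) / n - Z i) / n) := by
    rw [update_add_eq_add_single, Fvar_add_sub]
    simp [Pi.single_apply]
  have joint_sub_local :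
      (Fvar (Z + y) - Fvar Z) - ∑ i, (Fvar (Function.update Z i (Z i + y i)) - Fvar Z)
        = ((∑ i, y i) ^ 2 - ∑ i, y i ^ 2) / n ^ 2 := by
    rw [Fvar_add_sub, sum_congr rfl fun i _ ↦ local_gain i, sum_add_distrib,
      ← Fvar_sub_sum_Fvar_single]
    ring
  have : 0 ≤ ((∑ i, y i) ^ 2 - ∑ i, y i ^ 2) / n ^ 2 :=
    div_nonneg (sub_nonneg.2 (sum_sq_le_sq_sum_of_nonneg fun i _ ↦ hy i)) (sq_nonneg _)
  linarith

/-- **Local–Gain lower bound for negative variance.** -/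
theorem neg_variance_local_gain_lb {n : ℕ} (hn : 1 ≤ n)
    (Z y : Fin n → ℝ) (hy : ∀ i, 0 ≤ y i) :
    Fvar (Z + y) - Fvar Z ≥
      ∑ i, (Fvar (Function.update Z i (Z i + y i)) - Fvar Z) :=
  neg_variance_local_gain_lb_general Z y hy
end

section
/- For the maximin fairness function F_min(Z) = minᵢ zᵢ and a nonnegative increment vector y, the joint fairness improvement dominates the sum of local fairness gains: F_min(Z+y) − F_min(Z) ≥ Σᵢ [F_min(Z + yᵢeᵢ) − F_min(Z)]. -/
open Finset

/-- Maximin fairness function `F_min(Z) = min_i z_i`. -/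
def Fmin {n : ℕ} (hn : 0 < n) (Z : Fin n → ℝ) : ℝ :=
  Finset.univ.inf' ⟨⟨0, hn⟩, Finset.mem_univ _⟩ Z

/-- **Local–Gain lower bound for maximin.** -/
theorem maximin_local_gain_lb {n : ℕ} (hn : 0 < n)
    (Z y : Fin n → ℝ) (hy : ∀ i, 0 ≤ y i) :
    Fmin hn (Z + y) - Fmin hn Z ≥
      ∑ i, (Fmin hn (Function.update Z i (Z i + y i)) - Fmin hn Z) := by
  have hne : (Finset.univ : Finset (Fin n)).Nonempty := ⟨⟨0, hn⟩, Finset.mem_univ _⟩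
  obtain ⟨i₀, _, hi₀⟩ := Finset.exists_mem_eq_inf' hne Z
  have hsum : ∑ i, (Fmin hn (Function.update Z i (Z i + y i)) - Fmin hn Z)
      = Fmin hn (Function.update Z i₀ (Z i₀ + y i₀)) - Fmin hn Z := by
    apply Finset.sum_eq_single
    · intro i _ hi
      have heq : Fmin hn (Function.update Z i (Z i + y i)) = Fmin hn Z := by
        apply le_antisymm
        · calc Fmin hn (Function.update Z i (Z i + y i))
              ≤ Function.update Z i (Z i + y i) i₀ := Finset.inf'_le _ (Finset.mem_univ _)
          _ = Z i₀ := by rw [Function.update_of_ne (Ne.symm hi)]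
          _ = Fmin hn Z := hi₀.symm
        · apply Finset.le_inf'
          intro j _
          rcases eq_or_ne j i with rfl | hj
          · rw [Function.update_self]
            calc Fmin hn Z ≤ Z j := Finset.inf'_le _ (Finset.mem_univ _)
            _ ≤ Z j + y j := le_add_of_nonneg_right (hy j)
          · rw [Function.update_of_ne hj]
            exact Finset.inf'_le _ (Finset.mem_univ _)
      rw [heq, sub_self]
    · intro h; exact absurd (Finset.mem_univ i₀) h
  rw [hsum]
  apply sub_le_sub_right
  apply Finset.le_inf'
  intro j _
  calc Fmin hn (Function.update Z i₀ (Z i₀ + y i₀))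
      ≤ Function.update Z i₀ (Z i₀ + y i₀) j := Finset.inf'_le _ (Finset.mem_univ _)
  _ ≤ (Z + y) j := by
      rcases eq_or_ne j i₀ with rfl | hj
      · rw [Function.update_self]; rfl
      · rw [Function.update_of_ne hj]; exact le_add_of_nonneg_right (hy j)
end

section
/- Suppose Z has a unique minimizer i* with minimum value m, second-smallest baseline value σ = min_{j≠i*} zⱼ, and post-update second-smallest value σ' = min_{j≠i*}(zⱼ + yⱼ). Then for nonnegative y: the sum of local maximin gains equals min{y_{i*}, σ − m}, the joint maximin improvement equals min{y_{i*}, σ' − m}, and since σ' ≥ σ the joint improvement is at least the sum of local gains. -/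
open Finset

/-- **Unique-minimizer case for maximin:** with unique minimizer `i*`,
second-smallest baseline value `σ` and post-update second-smallest value `σ'`,
the sum of local gains is `min{y_{i*}, σ - m}`, the joint improvement is
`min{y_{i*}, σ' - m}`, and the joint improvement dominates the local sum. -/
theorem maximin_unique_minimizer {n : ℕ} (hn2 : 2 ≤ n) (hn : 0 < n)
    (Z y : Fin n → ℝ) (hy : ∀ i, 0 ≤ y i)
    (istar : Fin n) (hmin : Z istar = Fmin hn Z)
    (huniq : ∀ j, Z j = Fmin hn Z → j = istar)
    (hne : (({istar}ᶜ : Finset (Fin n))).Nonempty)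
    (σ σ' : ℝ)
    (hσ : σ = (({istar}ᶜ : Finset (Fin n))).inf' hne Z)
    (hσ' : σ' = (({istar}ᶜ : Finset (Fin n))).inf' hne (fun j => Z j + y j)) :
    (∑ i, (Fmin hn (Function.update Z i (Z i + y i)) - Fmin hn Z) =
        min (y istar) (σ - Fmin hn Z)) ∧
      (Fmin hn (Z + y) - Fmin hn Z = min (y istar) (σ' - Fmin hn Z)) ∧
      σ ≤ σ' ∧
      (Fmin hn (Z + y) - Fmin hn Z ≥
        ∑ i, (Fmin hn (Function.update Z i (Z i + y i)) - Fmin hn Z)) := by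
  set m := Fmin hn Z with hm
  -- splitting lemma
  have split : ∀ W : Fin n → ℝ,
      Fmin hn W = min (W istar) ((({istar}ᶜ : Finset (Fin n))).inf' hne W) := by
    intro W
    apply le_antisymm
    · apply le_min
      · exact Finset.inf'_le _ (Finset.mem_univ _)
      · exact Finset.le_inf' _ _ fun j _ => Finset.inf'_le _ (Finset.mem_univ _)
    · apply Finset.le_inf'
      intro j _
      by_cases h : j = istar
      · subst h; exact min_le_left _ _
      · exact le_trans (min_le_right _ _)
          (Finset.inf'_le _ (by simp [Finset.mem_compl, h]))
  -- m ≤ each entry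
  have hle : ∀ j, m ≤ Z j := fun j => Finset.inf'_le _ (Finset.mem_univ _)
  have hmσ : m ≤ σ := by
    rw [hσ]; exact Finset.le_inf' _ _ fun j _ => hle j
  -- local terms for i ≠ istar are 0
  have hzero : ∀ i, i ≠ istar → Fmin hn (Function.update Z i (Z i + y i)) = m := by
    intro i hi
    rw [split]
    have h1 : Function.update Z i (Z i + y i) istar = Z istar := by
      rw [Function.update_of_ne (Ne.symm hi)]
    rw [h1, ← hmin]
    have h2 : m ≤ (({istar}ᶜ : Finset (Fin n))).inf' hne
        (Function.update Z i (Z i + y i)) := by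
      apply Finset.le_inf'
      intro j _
      by_cases hj : j = i
      · subst hj
        rw [Function.update_self]
        exact le_add_of_le_of_nonneg (hle j) (hy j)
      · rw [Function.update_of_ne hj]; exact hle j
    rw [← hmin] at h2
    exact min_eq_left h2
  -- local term at istar
  have hstar : Fmin hn (Function.update Z istar (Z istar + y istar)) =
      min (Z istar + y istar) σ := by
    rw [split, Function.update_self, hσ]
    congr 1
    apply Finset.inf'_congr _ rfl
    intro j hj
    have : j ≠ istar := by simpa using hj
    rw [Function.update_of_ne this]
  have hsum : (∑ i, (Fmin hn (Function.update Z i (Z i + y i)) - Fmin hn Z) =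
      min (y istar) (σ - m)) := by
    rw [Finset.sum_eq_single istar]
    · rw [hstar, hmin]
      rcases le_total (m + y istar) σ with h | h
      · rw [min_eq_left h, min_eq_left (by linarith)]; ring
      · rw [min_eq_right h, min_eq_right (by linarith)]
    · intro i _ hi
      rw [hzero i hi]; ring
    · intro h; exact absurd (Finset.mem_univ istar) h
  have hjoint : Fmin hn (Z + y) = min (Z istar + y istar) σ' := by
    rw [split, hσ']
    rfl
  have hσσ' : σ ≤ σ' := by
    rw [hσ, hσ']
    apply Finset.le_inf'
    intro j hj
    exact le_add_of_le_of_nonneg (Finset.inf'_le _ hj) (hy j)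
  have hjoint' : Fmin hn (Z + y) - m = min (y istar) (σ' - m) := by
    rw [hjoint, hmin]
    rcases le_total (m + y istar) σ' with h | h
    · rw [min_eq_left h, min_eq_left (by linarith)]; ring
    · rw [min_eq_right h, min_eq_right (by linarith)]
  refine ⟨hsum, hjoint', hσσ', ?_⟩
  rw [hsum, hjoint']
  exact min_le_min (le_refl _) (by linarith)
end

section
/- For the generalized Gini fairness function F_GGF(Z) = Σₖ wₖ z₍ₖ₎ (sorted ascending) with nonincreasing nonnegative weights w₁ ≥ w₂ ≥ ... ≥ wₙ ≥ 0, and nonnegative increment vector y, the joint fairness improvement dominates the sum of local gains: F_GGF(Z+y) − F_GGF(Z) ≥ Σᵢ [F_GGF(Z + yᵢeᵢ) − F_GGF(Z)]. -/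
open Finset

/-- Generalized Gini fairness function `F_GGF(Z) = ∑ k, w_k z_(k)`, where
`z_(1) ≤ ... ≤ z_(n)` are the ascending order statistics of `Z`. -/
noncomputable def FGGF {n : ℕ} (w Z : Fin n → ℝ) : ℝ :=
  ∑ k, w k * Z (Tuple.sort Z k)

section Aux
variable {n : ℕ}

/-- The `k`-th smallest value of `Z` (0-indexed), or `0` out of range. -/
noncomputable def sv (Z : Fin n → ℝ) (k : ℕ) : ℝ :=
  if h : k < n then Z (Tuple.sort Z ⟨k, h⟩) else 0

/-- The sum of the `k` smallest values of `Z`. -/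
noncomputable def Ssm (Z : Fin n → ℝ) (k : ℕ) : ℝ :=
  ∑ j ∈ univ.filter (fun j : Fin n => (j : ℕ) < k), Z (Tuple.sort Z j)

lemma strictMono_le_apply {k : ℕ} (f : Fin k → Fin n) (hf : StrictMono f) :
    ∀ j : Fin k, (j : ℕ) ≤ (f j : ℕ) := by
  intro j
  induction' hj : (j : ℕ) with m ih generalizing j
  · exact Nat.zero_le _
  · have hm : m < k := by omega
    have h1 := ih ⟨m, hm⟩ rfl
    have hlt : f ⟨m, hm⟩ < f j := hf (by simp [Fin.lt_def, hj])
    have := Fin.lt_def.mp hlt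
    omega

lemma mono_sum_le {f : Fin n → ℝ} (hf : Monotone f) (B : Finset (Fin n)) :
    ∑ j ∈ univ.filter (fun j : Fin n => (j : ℕ) < B.card), f j ≤ ∑ b ∈ B, f b := by
  set k := B.card with hk
  have hkn : k ≤ n := by simpa using B.card_le_univ
  set emb := B.orderEmbOfFin hk.symm with hemb
  have hBim : B = Finset.univ.image emb := by
    ext b
    simp only [Finset.mem_image, Finset.mem_univ, true_and]
    constructor
    · intro hb
      have : b ∈ Set.range emb := by
        rw [Finset.range_orderEmbOfFin]; exact hb
      obtain ⟨j, hj⟩ := this; exact ⟨j, hj⟩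
    · rintro ⟨j, rfl⟩; exact Finset.orderEmbOfFin_mem B hk.symm j
  have hFilt : univ.filter (fun j : Fin n => (j : ℕ) < k) =
      Finset.univ.image (Fin.castLE hkn) := by
    ext j
    simp only [Finset.mem_filter, Finset.mem_univ, true_and, Finset.mem_image]
    constructor
    · intro hj; exact ⟨⟨j, hj⟩, rfl⟩
    · rintro ⟨j', rfl⟩; exact j'.isLt
  rw [hBim, hFilt, Finset.sum_image (fun a _ b _ h => Fin.castLE_injective hkn h),
    Finset.sum_image (fun a _ b _ h => emb.injective h)]
  apply Finset.sum_le_sum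
  intro j _
  apply hf
  have := strictMono_le_apply emb emb.strictMono j
  simpa [Fin.le_def] using this

lemma Ssm_le_sum (Z : Fin n → ℝ) (A : Finset (Fin n)) :
    Ssm Z A.card ≤ ∑ i ∈ A, Z i := by
  set σ := Tuple.sort Z with hσ
  set B := A.image σ.symm with hB
  have hcard : B.card = A.card := Finset.card_image_of_injective _ σ.symm.injective
  have hsum : ∑ b ∈ B, Z (σ b) = ∑ i ∈ A, Z i := by
    rw [hB, Finset.sum_image (fun a _ b _ h => σ.symm.injective h)]
    simp
  rw [Ssm, ← hsum, ← hcard]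
  exact mono_sum_le (Tuple.monotone_sort Z) B

lemma Ssm_min (Z : Fin n → ℝ) (k : ℕ) : Ssm Z k = Ssm Z (min k n) := by
  unfold Ssm
  congr 1
  ext j
  simp only [Finset.mem_filter, Finset.mem_univ, true_and]
  have := j.isLt
  omega

lemma Ssm_attained (Z : Fin n → ℝ) (k : ℕ) :
    ∃ A : Finset (Fin n), A.card = min k n ∧ Ssm Z k = ∑ i ∈ A, Z i := by
  set σ := Tuple.sort Z with hσ
  refine ⟨(univ.filter (fun j : Fin n => (j : ℕ) < k)).image σ, ?_, ?_⟩
  · rw [Finset.card_image_of_injective _ σ.injective]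
    have h1 : univ.filter (fun j : Fin n => (j : ℕ) < k) =
        (Finset.range (min k n)).attachFin (fun m hm => by
          simp only [Finset.mem_range] at hm; omega) := by
      ext j
      simp only [Finset.mem_filter, Finset.mem_univ, true_and, Finset.mem_attachFin,
        Finset.mem_range]
      have := j.isLt
      omega
    rw [h1, Finset.card_attachFin, Finset.card_range]
  · rw [Finset.sum_image (fun a _ b _ h => σ.injective h)]
    rfl

lemma Ssm_supermodular (x y : Fin n → ℝ) (k : ℕ) :
    Ssm x k + Ssm y k ≤
      Ssm (fun i => max (x i) (y i)) k + Ssm (fun i => min (x i) (y i)) k := by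
  set u := fun i => max (x i) (y i) with hu
  set v := fun i => min (x i) (y i) with hv
  obtain ⟨A, hAcard, hA⟩ := Ssm_attained u k
  obtain ⟨B, hBcard, hB⟩ := Ssm_attained v k
  set m := min k n with hm
  set P := (B \ A).filter (fun i => x i ≤ y i) with hP
  have hABcard : (A \ B).card = (B \ A).card := by
    rw [Finset.card_sdiff_comm (hAcard.trans hBcard.symm)]
  have hPle : P.card ≤ (A \ B).card := by
    rw [hABcard]; exact Finset.card_le_card (Finset.filter_subset _ _)
  obtain ⟨E, hEsub, hEcard⟩ := Finset.exists_subset_card_eq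
    (tsub_le_self : (A \ B).card - P.card ≤ (A \ B).card)
  set C := (A ∩ B) ∪ P ∪ E with hC
  set D := (A ∩ B) ∪ ((B \ A) \ P) ∪ ((A \ B) \ E) with hD
  have hPsub : P ⊆ B \ A := Finset.filter_subset _ _
  have d1 : Disjoint (A ∩ B) (B \ A) := by
    apply Finset.disjoint_left.mpr; intro a ha hb
    simp only [Finset.mem_inter, Finset.mem_sdiff] at *; tauto
  have d2 : Disjoint (A ∩ B) (A \ B) := by
    apply Finset.disjoint_left.mpr; intro a ha hb
    simp only [Finset.mem_inter, Finset.mem_sdiff] at *; tauto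
  have d3 : Disjoint (B \ A) (A \ B) := by
    apply Finset.disjoint_left.mpr; intro a ha hb
    simp only [Finset.mem_sdiff] at *; tauto
  have dCP : Disjoint (A ∩ B) P := d1.mono_right hPsub
  have dCE : Disjoint (A ∩ B) E := d2.mono_right hEsub
  have dPE : Disjoint P E := (d3.mono hPsub hEsub)
  have dCPE : Disjoint ((A ∩ B) ∪ P) E := Finset.disjoint_union_left.mpr ⟨dCE, dPE⟩
  have dD1 : Disjoint (A ∩ B) ((B \ A) \ P) := d1.mono_right (Finset.sdiff_subset)
  have dD2 : Disjoint (A ∩ B) ((A \ B) \ E) := d2.mono_right (Finset.sdiff_subset)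
  have dD3 : Disjoint ((B \ A) \ P) ((A \ B) \ E) :=
    d3.mono Finset.sdiff_subset Finset.sdiff_subset
  have dD12 : Disjoint ((A ∩ B) ∪ ((B \ A) \ P)) ((A \ B) \ E) :=
    Finset.disjoint_union_left.mpr ⟨dD2, dD3⟩
  have hAsplit : (A ∩ B).card + (A \ B).card = A.card := by
    rw [Finset.card_inter_add_card_sdiff]
  have hBsplit : (A ∩ B).card + (B \ A).card = B.card := by
    rw [Finset.inter_comm, Finset.card_inter_add_card_sdiff]
  have hCcard : C.card = m := by
    rw [hC, Finset.card_union_of_disjoint dCPE, Finset.card_union_of_disjoint dCP,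
      hEcard]
    omega
  have hDcard : D.card = m := by
    rw [hD, Finset.card_union_of_disjoint dD12, Finset.card_union_of_disjoint dD1,
      Finset.card_sdiff_of_subset hPsub, Finset.card_sdiff_of_subset hEsub, hEcard]
    omega
  have hx : Ssm x k ≤ ∑ i ∈ C, x i := by
    rw [Ssm_min x k, ← hm, ← hCcard]; exact Ssm_le_sum x C
  have hy : Ssm y k ≤ ∑ i ∈ D, y i := by
    rw [Ssm_min y k, ← hm, ← hDcard]; exact Ssm_le_sum y D
  have hsC : ∑ i ∈ C, x i = ∑ i ∈ A ∩ B, x i + ∑ i ∈ P, x i + ∑ i ∈ E, x i := by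
    rw [hC, Finset.sum_union dCPE, Finset.sum_union dCP]
  have hsD : ∑ i ∈ D, y i = ∑ i ∈ A ∩ B, y i + ∑ i ∈ (B \ A) \ P, y i
      + ∑ i ∈ (A \ B) \ E, y i := by
    rw [hD, Finset.sum_union dD12, Finset.sum_union dD1]
  have hsA : ∑ i ∈ A, u i = ∑ i ∈ A ∩ B, u i + (∑ i ∈ E, u i + ∑ i ∈ (A \ B) \ E, u i) := by
    rw [← Finset.sum_inter_add_sum_sdiff A B u]
    congr 1
    rw [← Finset.sum_sdiff hEsub]
    ring
  have hsB : ∑ i ∈ B, v i = ∑ i ∈ A ∩ B, v i + (∑ i ∈ P, v i + ∑ i ∈ (B \ A) \ P, v i) := by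
    rw [Finset.inter_comm, ← Finset.sum_inter_add_sum_sdiff B A v]
    congr 1
    rw [← Finset.sum_sdiff hPsub]
    ring
  have c1 : ∑ i ∈ A ∩ B, x i + ∑ i ∈ A ∩ B, y i = ∑ i ∈ A ∩ B, u i + ∑ i ∈ A ∩ B, v i := by
    rw [← Finset.sum_add_distrib, ← Finset.sum_add_distrib]
    exact Finset.sum_congr rfl (fun i _ => (max_add_min (x i) (y i)).symm)
  have c2 : ∑ i ∈ P, x i ≤ ∑ i ∈ P, v i := by
    apply Finset.sum_le_sum
    intro i hi
    rw [hP, Finset.mem_filter] at hi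
    simp [hv, hi.2]
  have c3 : ∑ i ∈ (B \ A) \ P, y i ≤ ∑ i ∈ (B \ A) \ P, v i := by
    apply Finset.sum_le_sum
    intro i hi
    rw [Finset.mem_sdiff, hP, Finset.mem_filter] at hi
    have : ¬ x i ≤ y i := fun h => hi.2 ⟨hi.1, h⟩
    simp only [hv]
    simp [min_def, le_of_not_ge this]
  have c4 : ∑ i ∈ E, x i ≤ ∑ i ∈ E, u i :=
    Finset.sum_le_sum (fun i _ => le_max_left _ _)
  have c5 : ∑ i ∈ (A \ B) \ E, y i ≤ ∑ i ∈ (A \ B) \ E, u i :=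
    Finset.sum_le_sum (fun i _ => le_max_right _ _)
  rw [hA, hB]
  linarith

lemma Ssm_eq_range (Z : Fin n → ℝ) {m : ℕ} (hm : m ≤ n) :
    Ssm Z m = ∑ k ∈ Finset.range m, sv Z k := by
  have h1 : Ssm Z m = ∑ j : Fin n, (if (j : ℕ) < m then sv Z (j : ℕ) else 0) := by
    rw [Ssm, Finset.sum_filter]
    apply Finset.sum_congr rfl
    intro j _
    split_ifs with h
    · simp [sv, j.isLt]
    · rfl
  rw [h1, Fin.sum_univ_eq_sum_range (fun k => if k < m then sv Z k else 0) n,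
    ← Finset.sum_filter]
  congr 1
  ext l
  simp only [Finset.mem_filter, Finset.mem_range]
  omega

lemma FGGF_eq_sum (w : Fin n → ℝ) (Z : Fin n → ℝ) :
    FGGF w Z = ∑ l ∈ Finset.range n,
      ((if h : l < n then w ⟨l, h⟩ else 0) - (if h : l + 1 < n then w ⟨l+1, h⟩ else 0))
        * Ssm Z (l+1) := by
  set W : ℕ → ℝ := fun l => if h : l < n then w ⟨l, h⟩ else 0 with hW
  set d : ℕ → ℝ := fun l => W l - W (l + 1) with hd
  have hWn : W n = 0 := by simp [hW]
  have hWk : ∀ k < n, W k = ∑ l ∈ Finset.Ico k n, d l := by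
    intro k hk
    rw [Finset.sum_Ico_eq_sub _ (le_of_lt hk)]
    have t1 : ∑ l ∈ Finset.range n, d l = W 0 - W n := Finset.sum_range_sub' W n
    have t2 : ∑ l ∈ Finset.range k, d l = W 0 - W k := Finset.sum_range_sub' W k
    rw [t1, t2, hWn]; ring
  have step1 : FGGF w Z = ∑ k ∈ Finset.range n, W k * sv Z k := by
    rw [FGGF, ← Fin.sum_univ_eq_sum_range (fun k => W k * sv Z k) n]
    apply Finset.sum_congr rfl
    intro j _
    simp [hW, sv, j.isLt]
  rw [step1]
  have step2 : ∑ k ∈ Finset.range n, W k * sv Z k =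
      ∑ k ∈ Finset.range n, ∑ l ∈ Finset.range n,
        (if k ≤ l then d l * sv Z k else 0) := by
    apply Finset.sum_congr rfl
    intro k hk
    rw [Finset.mem_range] at hk
    rw [hWk k hk, Finset.sum_mul, ← Finset.sum_filter]
    apply Finset.sum_congr
    · ext l; simp only [Finset.mem_Ico, Finset.mem_filter, Finset.mem_range]; omega
    · intros; ring
  rw [step2, Finset.sum_comm]
  apply Finset.sum_congr rfl
  intro l hl
  rw [Finset.mem_range] at hl
  rw [← Finset.sum_filter]
  have hfilt : (Finset.range n).filter (fun k => k ≤ l) = Finset.range (l + 1) := by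
    ext k; simp only [Finset.mem_filter, Finset.mem_range]; omega
  rw [hfilt, ← Finset.mul_sum, Ssm_eq_range Z (by omega : l + 1 ≤ n)]

lemma FGGF_supermodular (w : Fin n → ℝ)
    (hw : ∀ i j : Fin n, i ≤ j → w j ≤ w i) (hw0 : ∀ k, 0 ≤ w k)
    (x y : Fin n → ℝ) :
    FGGF w x + FGGF w y ≤
      FGGF w (fun i => max (x i) (y i)) + FGGF w (fun i => min (x i) (y i)) := by
  rw [FGGF_eq_sum w x, FGGF_eq_sum w y, FGGF_eq_sum w (fun i => max (x i) (y i)),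
    FGGF_eq_sum w (fun i => min (x i) (y i)), ← Finset.sum_add_distrib,
    ← Finset.sum_add_distrib]
  apply Finset.sum_le_sum
  intro l hl
  rw [Finset.mem_range] at hl
  have hd : 0 ≤ (if h : l < n then w ⟨l, h⟩ else 0) -
      (if h : l + 1 < n then w ⟨l+1, h⟩ else 0) := by
    rw [dif_pos hl]
    split_ifs with h
    · have := hw ⟨l, hl⟩ ⟨l+1, h⟩ (by simp [Fin.le_def])
      linarith
    · have := hw0 ⟨l, hl⟩
      linarith
  have hs := Ssm_supermodular x y (l + 1)
  set dl := (if h : l < n then w ⟨l, h⟩ else 0) -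
      (if h : l + 1 < n then w ⟨l+1, h⟩ else 0)
  have := mul_le_mul_of_nonneg_left hs hd
  rw [mul_add, mul_add] at this
  linarith

end Aux

/-- **Local–Gain lower bound for GGF** with nonincreasing nonnegative
weights. -/
theorem ggf_local_gain_lb {n : ℕ} (w : Fin n → ℝ)
    (hw : ∀ i j : Fin n, i ≤ j → w j ≤ w i) (hw0 : ∀ k, 0 ≤ w k)
    (Z y : Fin n → ℝ) (hy : ∀ i, 0 ≤ y i) :
    FGGF w (Z + y) - FGGF w Z ≥
      ∑ i, (FGGF w (Function.update Z i (Z i + y i)) - FGGF w Z) := by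
  have key : ∀ S : Finset (Fin n),
      ∑ i ∈ S, (FGGF w (Function.update Z i (Z i + y i)) - FGGF w Z) ≤
        FGGF w (fun j => if j ∈ S then Z j + y j else Z j) - FGGF w Z := by
    intro S
    induction S using Finset.induction_on with
    | empty => simp
    | @insert i S hiS ih =>
      have hmax : (fun j => if j ∈ insert i S then Z j + y j else Z j) =
          (fun j => max ((if j ∈ S then Z j + y j else Z j))
            ((Function.update Z i (Z i + y i)) j)) := by
        funext j
        rcases eq_or_ne j i with rfl | hji
        · simp [hiS, hy j, Function.update_self, le_add_iff_nonneg_right]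
        · simp [Function.update_of_ne hji, hji]
          split_ifs <;> simp [hy j, le_add_iff_nonneg_right]
      have hmin : Z = (fun j => min ((if j ∈ S then Z j + y j else Z j))
            ((Function.update Z i (Z i + y i)) j)) := by
        funext j
        rcases eq_or_ne j i with rfl | hji
        · simp [hiS, hy j, Function.update_self, le_add_iff_nonneg_right]
        · simp [Function.update_of_ne hji, hji]
          split_ifs <;> simp [hy j, le_add_iff_nonneg_right]
      have hsup := FGGF_supermodular w hw hw0
        (fun j => if j ∈ S then Z j + y j else Z j)
        (Function.update Z i (Z i + y i))
      rw [← hmax, ← hmin] at hsup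
      rw [Finset.sum_insert hiS]
      linarith
  have h := key Finset.univ
  have huniv : (fun j => if j ∈ (Finset.univ : Finset (Fin n)) then Z j + y j else Z j)
      = Z + y := by
    funext j; simp
  rw [huniv] at h
  exact h
end

section
/- For Sₖ(Z) defined as the sum of the k smallest entries of Z, and a nonnegative increment vector y, the joint improvement dominates the sum of local improvements: Sₖ(Z+y) − Sₖ(Z) ≥ Σᵢ [Sₖ(Z + yᵢeᵢ) − Sₖ(Z)]. -/
open Finset

/-- `S_k(Z)`: the minimum of `∑_{j∈J} z_j` over all `k`-element subsets `J`
of the index set (equivalently, the sum of the `k` smallest entries of `Z`). -/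
noncomputable def Sk {n : ℕ} (k : ℕ) (Z : Fin n → ℝ) : ℝ :=
  sInf ((fun J : Finset (Fin n) => ∑ j ∈ J, Z j) '' {J | J.card = k})

/-! Let `J₀` minimise `Z` and `J` minimise `Z + y`. Raising one coordinate `i` by `y i` gains
nothing if `i ∉ J₀`, at most `y i` if `i ∈ J₀ ∩ J`, and at most `z_m - z_i` if `i ∈ J₀ \ J`, where
`m ∈ J \ J₀` is swapped in for `i`. As `J₀ \ J` and `J \ J₀` have the same size, summing these
bounds gives at most `∑_{J ∩ J₀} y + ∑_{J \ J₀} z - ∑_{J₀ \ J} z ≤ S_k(Z + y) - S_k(Z)`. -/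

theorem Finset.sum_le_sum_of_card_eq_of_forall_le {ι M : Type*}
    [AddCommMonoid M] [LinearOrder M] [IsOrderedAddMonoid M] {s t : Finset ι}
    (hst : s.card = t.card) {f g : ι → M} (hfg : ∀ i ∈ s, ∀ j ∈ t, f i ≤ g j) :
    ∑ i ∈ s, f i ≤ ∑ j ∈ t, g j := by
  rcases s.eq_empty_or_nonempty with rfl | hs
  · rw [card_empty, eq_comm, card_eq_zero] at hst
    simp [hst]
  calc ∑ i ∈ s, f i ≤ s.card • s.sup' hs f :=
        sum_le_card_nsmul _ _ _ fun i hi => le_sup' f hi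
    _ = t.card • s.sup' hs f := by rw [hst]
    _ ≤ ∑ j ∈ t, g j :=
        card_nsmul_le_sum _ _ _ fun j hj => sup'_le hs f fun i hi => hfg i hi j hj

section Sk

variable {n k : ℕ} (Z : Fin n → ℝ) {J : Finset (Fin n)}

theorem Sk_le_sum (hJ : J.card = k) : Sk k Z ≤ ∑ j ∈ J, Z j :=
  csInf_le (Set.Finite.image _ (Set.toFinite _)).bddBelow ⟨J, hJ, rfl⟩

theorem exists_card_eq_Sk_eq_sum (hkn : k ≤ n) :
    ∃ J : Finset (Fin n), J.card = k ∧ Sk k Z = ∑ j ∈ J, Z j := by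
  obtain ⟨J₁, -, hJ₁⟩ := exists_subset_card_eq (s := (univ : Finset (Fin n))) (by simpa using hkn)
  have hne : ((fun J : Finset (Fin n) => ∑ j ∈ J, Z j) '' {J | J.card = k}).Nonempty :=
    ⟨_, J₁, hJ₁, rfl⟩
  obtain ⟨J, hJ, hsum⟩ := hne.csInf_mem (Set.Finite.image _ (Set.toFinite _))
  exact ⟨J, hJ, hsum.symm⟩

theorem Sk_update_le_of_notMem (hJ : J.card = k) {i : Fin n} (hi : i ∉ J) (a : ℝ) :
    Sk k (Function.update Z i a) ≤ ∑ j ∈ J, Z j :=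
  (Sk_le_sum _ hJ).trans_eq (sum_update_of_notMem hi Z a)

theorem Sk_update_le_of_mem (hJ : J.card = k) {i : Fin n} (hi : i ∈ J) (a : ℝ) :
    Sk k (Function.update Z i a) ≤ ∑ j ∈ J, Z j - Z i + a := by
  refine (Sk_le_sum _ hJ).trans_eq ?_
  rw [sum_update_of_mem hi, sdiff_singleton_eq_erase, sum_erase_eq_sub hi]
  ring

theorem Sk_update_le_of_mem_of_notMem (hJ : J.card = k) {i m : Fin n} (hi : i ∈ J) (hm : m ∉ J)
    (a : ℝ) : Sk k (Function.update Z i a) ≤ ∑ j ∈ J, Z j - Z i + Z m := by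
  have hm' : m ∉ J.erase i := fun h => hm (mem_of_mem_erase h)
  have hcard : (insert m (J.erase i)).card = k := by
    rw [card_insert_of_notMem hm', card_erase_add_one hi, hJ]
  have hi' : i ∉ insert m (J.erase i) := by
    simp [ne_of_mem_of_not_mem hi hm]
  refine (Sk_update_le_of_notMem Z hcard hi' a).trans_eq ?_
  rw [sum_insert hm', sum_erase_eq_sub hi]
  ring

end Sk

theorem sum_k_smallest_local_gain_lb_general {n : ℕ} (k : ℕ)
    (hkn : k ≤ n) (Z y : Fin n → ℝ) (hy : ∀ i, 0 ≤ y i) :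
    Sk k (Z + y) - Sk k Z ≥
      ∑ i, (Sk k (Function.update Z i (Z i + y i)) - Sk k Z) := by
  obtain ⟨J₀, hJ₀, hZ⟩ := exists_card_eq_Sk_eq_sum Z hkn
  obtain ⟨J, hJ, hZy⟩ := exists_card_eq_Sk_eq_sum (Z + y) hkn
  let gain := fun i => Sk k (Function.update Z i (Z i + y i)) - Sk k Z
  have gain_off : ∑ i, gain i ≤ ∑ i ∈ J₀, gain i :=
    sum_le_sum_of_subset_of_nonpos' (subset_univ J₀) fun i _ hi => by
      dsimp only [gain]
      linarith [Sk_update_le_of_notMem Z hJ₀ hi (Z i + y i), hZ]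
  have gain_inter : ∑ i ∈ J₀ ∩ J, gain i ≤ ∑ i ∈ J₀ ∩ J, y i :=
    sum_le_sum fun i hi => by
      dsimp only [gain]
      linarith [Sk_update_le_of_mem Z hJ₀ (mem_inter.1 hi).1 (Z i + y i), hZ]
  have gain_sdiff : ∑ i ∈ J₀ \ J, (gain i + Z i) ≤ ∑ m ∈ J \ J₀, (Z m + y m) :=
    sum_le_sum_of_card_eq_of_forall_le (card_sdiff_comm (hJ₀.trans hJ.symm)) fun i hi m hm => by
      dsimp only [gain]
      linarith [hZ, hy m, Sk_update_le_of_mem_of_notMem Z hJ₀ (mem_sdiff.1 hi).1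
        (mem_sdiff.1 hm).2 (Z i + y i)]
  have hS : Sk k Z = ∑ i ∈ J₀ ∩ J, Z i + ∑ i ∈ J₀ \ J, Z i := by
    rw [hZ, sum_inter_add_sum_sdiff]
  have hSy : Sk k (Z + y) =
      ∑ i ∈ J₀ ∩ J, Z i + ∑ i ∈ J₀ ∩ J, y i + ∑ m ∈ J \ J₀, (Z m + y m) := by
    rw [hZy, ← sum_inter_add_sum_sdiff J J₀, inter_comm, ← sum_add_distrib]
    rfl
  rw [← sum_inter_add_sum_sdiff J₀ J] at gain_off
  rw [sum_add_distrib] at gain_sdiff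
  linarith

/-- **Local–Gain lower bound for the sum of the `k` smallest entries.** -/
theorem sum_k_smallest_local_gain_lb {n : ℕ} (k : ℕ) (hk1 : 1 ≤ k)
    (hkn : k ≤ n) (Z y : Fin n → ℝ) (hy : ∀ i, 0 ≤ y i) :
    Sk k (Z + y) - Sk k Z ≥
      ∑ i, (Sk k (Function.update Z i (Z i + y i)) - Sk k Z) :=
  sum_k_smallest_local_gain_lb_general k hkn Z y hy
end

section
/- GGF upper bound via y_max cap: Let w₁ ≥ ... ≥ wₙ ≥ 0 be nonincreasing weights with wₙ₊₁ = 0, y ∈ ℝⁿ with yᵢ ≥ 0, Y = Σᵢ yᵢ, y_max = maxᵢ yᵢ > 0, m = |{i : yᵢ > 0}|, q = min(m, ⌊Y/y_max⌋), and r = Y − q·y_max. Then the joint GGF improvement satisfies F_GGF(Z+y) − F_GGF(Z) ≤ y_max·Σₖ₌₁^q wₖ + r·w_{q+1}. -/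
open Finset

/-- Weights extended by `w_{n+1} := 0` (0-indexed). -/
def wext {n : ℕ} (w : Fin n → ℝ) (k : ℕ) : ℝ :=
  if h : k < n then w ⟨k, h⟩ else 0

/-! Sorting `Z + y` and evaluating it along the order that sorts `Z` can only raise the
weighted sum of a nonincreasing `w` (rearrangement inequality), so the improvement is at most
`∑ₖ wₖ xₖ` where `xₖ` is the increment received by the `k`-th smallest entry of `Z`. Each
`xₖ` lies in `[0, y_max]`, and for antitone weights `wₖ xₖ ≤ w_q xₖ + (wₖ - w_q) y_max [k < q]`
termwise; summing gives the bound, the worst case being to fill the first `q` slots up to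
`y_max` and put the remainder `r` into slot `q + 1`. -/

lemma wext_val {n : ℕ} (f : Fin n → ℝ) (i : Fin n) : wext f i = f i := by
  simp [wext]

lemma antitone_wext {n : ℕ} {w : Fin n → ℝ} (hw : Antitone w) (hw0 : ∀ k, 0 ≤ w k) :
    Antitone (wext w) := by
  refine antitone_nat_of_succ_le fun k => ?_
  unfold wext
  by_cases hk : k + 1 < n
  · rw [dif_pos hk, dif_pos (by omega)]
    exact hw (Fin.mk_le_mk.mpr k.le_succ)
  · rw [dif_neg hk]
    split
    · exact hw0 _
    · exact le_rfl

lemma FGGF_add_le {n : ℕ} {w : Fin n → ℝ} (hw : Antitone w) (Z y : Fin n → ℝ) :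
    FGGF w (Z + y) ≤ FGGF w Z + ∑ i, w i * y (Tuple.sort Z i) := by
  have hanti : Antivary w ((Z + y) ∘ Tuple.sort (Z + y)) :=
    hw.antivary (Tuple.monotone_sort (Z + y))
  calc FGGF w (Z + y) = ∑ i, w i * ((Z + y) ∘ Tuple.sort (Z + y)) i := rfl
    _ ≤ ∑ i, w i * ((Z + y) ∘ Tuple.sort (Z + y)) (((Tuple.sort (Z + y))⁻¹ * Tuple.sort Z) i) :=
      hanti.sum_mul_le_sum_mul_comp_perm
    _ = FGGF w Z + ∑ i, w i * y (Tuple.sort Z i) := by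
      simp only [FGGF, Function.comp_apply, Equiv.Perm.mul_apply, Equiv.Perm.coe_inv, Equiv.apply_symm_apply,
        Pi.add_apply, mul_add, sum_add_distrib]

lemma sum_mul_le_of_antitone_of_mem_Icc {n q : ℕ} (hqn : q ≤ n) {w x : ℕ → ℝ} {c : ℝ}
    (hw : Antitone w) (hx : ∀ k < n, x k ∈ Set.Icc 0 c) :
    ∑ k ∈ range n, w k * x k ≤
      c * ∑ k ∈ range q, w k + (∑ k ∈ range n, x k - q * c) * w q := by
  have hterm : ∀ k ∈ range n,
      w k * x k ≤ w q * x k + (if k < q then (w k - w q) * c else 0) := by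
    intro k hk
    obtain ⟨hx0, hxc⟩ := hx k (mem_range.mp hk)
    split_ifs with hkq
    · nlinarith [hw hkq.le]
    · nlinarith [hw (not_lt.mp hkq)]
  have hcap : ∑ k ∈ range n, (if k < q then (w k - w q) * c else 0) =
      ∑ k ∈ range q, (w k - w q) * c := by
    rw [← sum_filter]
    congr 1
    ext k
    simp only [mem_filter, mem_range]
    omega
  calc ∑ k ∈ range n, w k * x k
      ≤ ∑ k ∈ range n, (w q * x k + (if k < q then (w k - w q) * c else 0)) := sum_le_sum hterm
    _ = c * ∑ k ∈ range q, w k + (∑ k ∈ range n, x k - q * c) * w q := by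
      rw [sum_add_distrib, hcap, ← mul_sum, ← sum_mul, sum_sub_distrib, sum_const, card_range,
        nsmul_eq_mul]
      ring

theorem ggf_ymax_cap_upper_bound_general {n : ℕ} (hn : 0 < n) (w : Fin n → ℝ)
    (hw : ∀ i j : Fin n, i ≤ j → w j ≤ w i) (hw0 : ∀ k, 0 ≤ w k)
    (Z y : Fin n → ℝ) (hy : ∀ i, 0 ≤ y i)
    (Y : ℝ) (hY : Y = ∑ i, y i)
    (ymax : ℝ)
    (hymax : ymax = Finset.univ.sup' ⟨⟨0, hn⟩, Finset.mem_univ _⟩ y)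
    (m : ℕ) (hm : m = (Finset.univ.filter (fun i => 0 < y i)).card)
    (q : ℕ) (hq : q = min m (Nat.floor (Y / ymax)))
    (r : ℝ) (hr : r = Y - q * ymax) :
    FGGF w (Z + y) - FGGF w Z ≤
      ymax * (∑ k ∈ Finset.range q, wext w k) + r * wext w q := by
  have hqn : q ≤ n := calc
    q ≤ m := hq ▸ min_le_left _ _
    _ ≤ n := hm ▸ (card_filter_le _ _).trans (card_fin n).le
  have hx : ∀ k < n, wext (y ∘ Tuple.sort Z) k ∈ Set.Icc 0 ymax := fun k hk => by
    rw [← Fin.val_mk hk, wext_val]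
    exact ⟨hy _, hymax ▸ le_sup' y (mem_univ _)⟩
  have hsum : ∑ k ∈ range n, wext (y ∘ Tuple.sort Z) k = Y := by
    rw [← Fin.sum_univ_eq_sum_range, hY]
    simp only [wext_val, Function.comp_apply, Equiv.sum_comp (Tuple.sort Z) y]
  have hgreedy := sum_mul_le_of_antitone_of_mem_Icc hqn (antitone_wext hw hw0) hx
  rw [hsum, ← hr, ← Fin.sum_univ_eq_sum_range] at hgreedy
  simp only [wext_val, Function.comp_apply] at hgreedy
  linarith [FGGF_add_le hw Z y]

/-- **GGF upper bound via the `y_max` cap:** with `Y = ∑ y_i`,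
`y_max = max_i y_i > 0`, `m` the number of strictly positive increments,
`q = min(m, ⌊Y/y_max⌋)` and `r = Y - q·y_max`, the joint GGF improvement is
at most `y_max · ∑_{k=1}^q w_k + r · w_{q+1}`. -/
theorem ggf_ymax_cap_upper_bound {n : ℕ} (hn : 0 < n) (w : Fin n → ℝ)
    (hw : ∀ i j : Fin n, i ≤ j → w j ≤ w i) (hw0 : ∀ k, 0 ≤ w k)
    (Z y : Fin n → ℝ) (hy : ∀ i, 0 ≤ y i)
    (Y : ℝ) (hY : Y = ∑ i, y i)
    (ymax : ℝ)
    (hymax : ymax = Finset.univ.sup' ⟨⟨0, hn⟩, Finset.mem_univ _⟩ y)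
    (hpos : 0 < ymax)
    (m : ℕ) (hm : m = (Finset.univ.filter (fun i => 0 < y i)).card)
    (q : ℕ) (hq : q = min m (Nat.floor (Y / ymax)))
    (r : ℝ) (hr : r = Y - q * ymax) :
    FGGF w (Z + y) - FGGF w Z ≤
      ymax * (∑ k ∈ Finset.range q, wext w k) + r * wext w q :=
  ggf_ymax_cap_upper_bound_general hn w hw hw0 Z y hy Y hY ymax hymax m hm q hq r hr
end

section
/- GGF joint improvement rearrangement bound: for nonincreasing nonnegative weights w and any nonnegative increment y with descending rearrangement y₍₁₎ ≥ ... ≥ y₍ₙ₎ (denoted y_[k]), the joint GGF improvement satisfies F_GGF(Z+y) − F_GGF(Z) ≤ Σₖ wₖ y_[k]. -/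
open Finset

/-- **GGF rearrangement bound:** for nonincreasing nonnegative weights `w`
and nonnegative increments `y` with descending rearrangement
`y_[1] ≥ ... ≥ y_[n]` (here `y_[k] = y (Tuple.sort y k.rev)`), the joint GGF
improvement is at most `∑ k, w_k · y_[k]`. -/
theorem ggf_rearrangement_bound {n : ℕ} (w : Fin n → ℝ)
    (hw : ∀ i j : Fin n, i ≤ j → w j ≤ w i) (hw0 : ∀ k, 0 ≤ w k)
    (Z y : Fin n → ℝ) (hy : ∀ i, 0 ≤ y i) :
    FGGF w (Z + y) - FGGF w Z ≤ ∑ k, w k * y (Tuple.sort y k.rev) := by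
  set τ := Tuple.sort Z with hτ
  set σ := Tuple.sort (Z + y) with hσ
  set ρ := Tuple.sort y with hρ
  -- Step A: FGGF w (Z+y) ≤ ∑ k, w k * (Z+y) (τ k)
  have hg : Monotone ((Z + y) ∘ σ) := Tuple.monotone_sort (Z + y)
  have hanti : Antivary w ((Z + y) ∘ σ) := by
    intro i j hij
    by_contra h
    exact absurd hij (not_lt.2 (hg (le_of_lt (lt_of_not_ge fun hle => h (hw i j hle)))))
  have stepA : FGGF w (Z + y) ≤ ∑ k, w k * (Z + y) (τ k) := by
    have := hanti.sum_mul_le_sum_mul_comp_perm (σ := τ.trans σ.symm)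
    simpa [FGGF, Function.comp] using this
  -- Step B: ∑ k, w k * y (τ k) ≤ ∑ k, w k * y (ρ k.rev)
  have hd : Antitone (fun k : Fin n => y (ρ k.rev)) := by
    intro i j hij
    exact Tuple.monotone_sort y (Fin.rev_le_rev.2 hij)
  have hmono : Monovary w (fun k : Fin n => y (ρ k.rev)) := by
    intro i j hij
    by_contra h
    have : ¬ j ≤ i := fun hle => h (hw j i hle)
    exact absurd hij (not_lt.2 (hd (le_of_lt (lt_of_not_ge this))))
  have stepB : ∑ k, w k * y (τ k) ≤ ∑ k, w k * y (ρ k.rev) := by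
    have := hmono.sum_mul_comp_perm_le_sum_mul
      (σ := τ.trans (ρ.symm.trans Fin.revPerm))
    simpa [Function.comp] using this
  have hFZ : FGGF w Z = ∑ k, w k * Z (τ k) := rfl
  have key : ∑ k, w k * (Z + y) (τ k) - ∑ k, w k * Z (τ k) = ∑ k, w k * y (τ k) := by
    rw [← Finset.sum_sub_distrib]
    congr 1; ext k; simp [Pi.add_apply]; ring
  linarith [stepA, stepB]
end
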